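/- arXiv:2502.01566 — 3 statements merged into one kernel-verified Lean document; each statement's English description precedes it below -/
import Mathlib

section
/- Let N ≥ 3, let μ be a nonzero Radon measure on ℝ^N with support contained in the open half space ℝ^N_+ and finite Newtonian potential, let 0 < k ≤ 1, and let p > 0. Then for every λ > 0 the problem (1.1) has no positive solution. -/
/-
Dropping the nonnegative terms of the equation gives `u ≥ c ∫ |x - y|^{2-N} dμ(y)` a.e. in
`ℝ^N_+`. The right side is lower semicontinuous (Fatou) and positive everywhere because `μ ≠ 0`,
so the boundary values `u(x', 0)` are positive a.e. By Tonelli,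
`∫ H_u(y') |x - (y',0)|^{2-N} dy' = ∫ u(z',0)^p ∫ |y' - z'|^{-k} |x - (y',0)|^{2-N} dy' dz'`,
and the inner integral diverges at infinity: its integrand decays only like `|y'|^{-(k+N-2)}`,
and `k + N - 2 ≤ N - 1 = dim ℝ^{N-1}`. This contradicts condition (ii).
-/

open MeasureTheory ENNReal Filter

noncomputable section

/-- The point `(y', t) ∈ ℝ^N` for `y' ∈ ℝ^{N-1}`, `t ∈ ℝ`. -/
def up (N : ℕ) (y' : EuclideanSpace ℝ (Fin (N - 1))) (t : ℝ) : EuclideanSpace ℝ (Fin N) :=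
  (WithLp.equiv 2 (Fin N → ℝ)).symm fun i => if h : (i : ℕ) < N - 1 then y' ⟨i, h⟩ else t

/-- The last coordinate `x_N` of `x ∈ ℝ^N`. -/
def ht (N : ℕ) (x : EuclideanSpace ℝ (Fin N)) : ℝ :=
  if h : N - 1 < N then x ⟨N - 1, h⟩ else 0

/-- Reflection `x̄ = (x', -x_N)` of `x = (x', x_N)` in the hyperplane `x_N = 0`. -/
def reflN (N : ℕ) (x : EuclideanSpace ℝ (Fin N)) : EuclideanSpace ℝ (Fin N) :=
  (WithLp.equiv 2 (Fin N → ℝ)).symm fun i => if (i : ℕ) < N - 1 then x i else -x i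

/-- Surface area `σ_N` of the unit sphere in `ℝ^N` (equal to `N` times the unit ball volume). -/
def sphereArea (N : ℕ) : ℝ :=
  N * (volume (Metric.ball (0 : EuclideanSpace ℝ (Fin N)) 1)).toReal

/-- The open upper half space `ℝ^N_+ = ℝ^{N-1} × (0,∞)`. -/
def upperHalf (N : ℕ) : Set (EuclideanSpace ℝ (Fin N)) := {x | 0 < ht N x}

/-- `H_u(x') = ∫_{ℝ^{N-1}} u(y',0)^p |x'-y'|^{-k} dy'`. -/
def Hu (N : ℕ) (p k : ℝ) (u : EuclideanSpace ℝ (Fin N) → ℝ)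
    (x' : EuclideanSpace ℝ (Fin (N - 1))) : ℝ≥0∞ :=
  ∫⁻ y', ENNReal.ofReal (u (up N y' 0)) ^ p * ENNReal.ofReal ‖x' - y'‖ ^ (-k)

/-- The Newtonian potential `U^ν(x) = (1/((N-2)σ_N)) ∫ |x-y|^{2-N} dν(y)`. -/
def NewtPot (N : ℕ) (ν : Measure (EuclideanSpace ℝ (Fin N)))
    (x : EuclideanSpace ℝ (Fin N)) : ℝ :=
  (((N : ℝ) - 2) * sphereArea N)⁻¹ * (∫⁻ y, ENNReal.ofReal ‖x - y‖ ^ ((2:ℝ) - N) ∂ν).toReal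

/-- The Green potential `∫_{ℝ^N_+} G(x,y) dμ(y)` for the Neumann Green function
`G(x,y) = (|x-y|^{2-N} + |x̄-y|^{2-N})/((N-2)σ_N)` of the half space. -/
def GreenPot (N : ℕ) (μ : Measure (EuclideanSpace ℝ (Fin N)))
    (x : EuclideanSpace ℝ (Fin N)) : ℝ :=
  (((N : ℝ) - 2) * sphereArea N)⁻¹ *
    (∫⁻ y, (ENNReal.ofReal ‖x - y‖ ^ ((2:ℝ) - N)
          + ENNReal.ofReal ‖reflN N x - y‖ ^ ((2:ℝ) - N)) ∂μ).toReal

/-- `μ` is a nonzero Radon (locally finite Borel) measure whose support is contained in the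
open upper half space and whose Newtonian potential is finite everywhere. -/
def AdmissibleMeasure (N : ℕ) (μ : Measure (EuclideanSpace ℝ (Fin N))) : Prop :=
  μ ≠ 0 ∧ IsLocallyFiniteMeasure μ ∧
    (∃ F : Set (EuclideanSpace ℝ (Fin N)), IsClosed F ∧ F ⊆ upperHalf N ∧ μ Fᶜ = 0) ∧
    (∀ x, (∫⁻ y, ENNReal.ofReal ‖x - y‖ ^ ((2:ℝ) - N) ∂μ) < ⊤)

/-- A measurable function `u` is a positive solution of problem (1.1):
(i) `u > 0` a.e. in `ℝ^N_+`, and for a.e. `x' ∈ ℝ^{N-1}`, `u(z) → u(x',0)` as `z → (x',0)`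
with `z ∈ ℝ^N_+`;
(ii) `H_u < ∞` a.e. in `ℝ^{N-1}`, and `∫_{ℝ^{N-1}} H_u(y')|x-(y',0)|^{2-N} dy' < ∞` for
a.e. `x ∈ ℝ^N_+`;
(iii) `u(x) = ∫_{ℝ^N_+} G(x,y) dμ(y)
　　　　+ (2λ/((N-2)σ_N)) ∫∫ u(z',0)^p |x-(y',0)|^{2-N} |y'-z'|^{-k} dz' dy'`
for a.e. `x ∈ ℝ^N_+`. -/
def IsPosSolution (N : ℕ) (p lam k : ℝ) (μ : Measure (EuclideanSpace ℝ (Fin N)))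
    (u : EuclideanSpace ℝ (Fin N) → ℝ) : Prop :=
  Measurable u ∧
  (∀ᵐ x ∂(volume.restrict (upperHalf N)), 0 < u x) ∧
  (∀ᵐ x' ∂(volume : Measure (EuclideanSpace ℝ (Fin (N - 1)))),
    Tendsto u (nhdsWithin (up N x' 0) (upperHalf N)) (nhds (u (up N x' 0)))) ∧
  (∀ᵐ x' ∂(volume : Measure (EuclideanSpace ℝ (Fin (N - 1)))), Hu N p k u x' < ⊤) ∧
  (∀ᵐ x ∂(volume.restrict (upperHalf N)),
    (∫⁻ y', Hu N p k u y' * ENNReal.ofReal ‖x - up N y' 0‖ ^ ((2:ℝ) - N)) < ⊤) ∧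
  (∀ᵐ x ∂(volume.restrict (upperHalf N)),
    ENNReal.ofReal (u x) =
      ENNReal.ofReal (((N : ℝ) - 2) * sphereArea N)⁻¹ *
        (∫⁻ y, (ENNReal.ofReal ‖x - y‖ ^ ((2:ℝ) - N)
              + ENNReal.ofReal ‖reflN N x - y‖ ^ ((2:ℝ) - N)) ∂μ) +
      ENNReal.ofReal (2 * lam / (((N : ℝ) - 2) * sphereArea N)) *
        ∫⁻ y', ENNReal.ofReal ‖x - up N y' 0‖ ^ ((2:ℝ) - N) * Hu N p k u y')

/-- A measurable function `u` is a positive solution of problem (1.1) with `μ ≡ 0`: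
conditions (i), (ii) as above and
(iii) `u(x) = (2λ/((N-2)σ_N)) ∫∫ u(z',0)^p |x-(y',0)|^{2-N} |y'-z'|^{-k} dz' dy'`
for a.e. `x ∈ ℝ^N_+`. -/
def IsPosSolution0 (N : ℕ) (p lam k : ℝ) (u : EuclideanSpace ℝ (Fin N) → ℝ) : Prop :=
  Measurable u ∧
  (∀ᵐ x ∂(volume.restrict (upperHalf N)), 0 < u x) ∧
  (∀ᵐ x' ∂(volume : Measure (EuclideanSpace ℝ (Fin (N - 1)))),
    Tendsto u (nhdsWithin (up N x' 0) (upperHalf N)) (nhds (u (up N x' 0)))) ∧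
  (∀ᵐ x' ∂(volume : Measure (EuclideanSpace ℝ (Fin (N - 1)))), Hu N p k u x' < ⊤) ∧
  (∀ᵐ x ∂(volume.restrict (upperHalf N)),
    (∫⁻ y', Hu N p k u y' * ENNReal.ofReal ‖x - up N y' 0‖ ^ ((2:ℝ) - N)) < ⊤) ∧
  (∀ᵐ x ∂(volume.restrict (upperHalf N)),
    ENNReal.ofReal (u x) =
      ENNReal.ofReal (2 * lam / (((N : ℝ) - 2) * sphereArea N)) *
        ∫⁻ y', ENNReal.ofReal ‖x - up N y' 0‖ ^ ((2:ℝ) - N) * Hu N p k u y')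

/-- The boundary trace `x' ↦ u(x',0)` belongs to `L^q_loc(ℝ^{N-1})`. -/
def BdryLocLp (N : ℕ) (q : ℝ) (u : EuclideanSpace ℝ (Fin N) → ℝ) : Prop :=
  ∀ K : Set (EuclideanSpace ℝ (Fin (N - 1))), IsCompact K →
    MemLp (fun x' => u (up N x' 0)) (ENNReal.ofReal q) (volume.restrict K)

open Topology Set Module

namespace ENNReal

theorem rpow_le_rpow_of_nonpos {x y : ℝ≥0∞} {z : ℝ} (hz : z ≤ 0) (h : x ≤ y) :
    y ^ z ≤ x ^ z := by
  simpa only [← rpow_neg, neg_neg] using ENNReal.inv_le_inv.2 (rpow_le_rpow h (neg_nonneg.2 hz))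

end ENNReal

theorem LowerSemicontinuousAt.le_of_ae_restrict_le {X α : Type*} [TopologicalSpace X]
    [MeasurableSpace X] [TopologicalSpace α] [LinearOrder α] [DenselyOrdered α]
    [ClosedIciTopology α] {ν : Measure X} {s : Set X} {x₀ : X} {g v : X → α}
    (hg : LowerSemicontinuousAt g x₀) (hs : MeasurableSet s)
    (hx₀ : x₀ ∈ (ν.restrict s).support) (hv : Tendsto v (𝓝[s] x₀) (𝓝 (v x₀)))
    (hle : ∀ᵐ x ∂ν.restrict s, g x ≤ v x) : g x₀ ≤ v x₀ := by
  have hne : (𝓝 x₀ ⊓ ae (ν.restrict s)).NeBot := by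
    refine inf_neBot_iff.2 fun U hU T hT => nonempty_of_measure_ne_zero (μ := ν.restrict s) ?_
    rw [measure_inter_conull hT]
    exact ((Measure.mem_support_iff_forall x₀).1 hx₀ U hU).ne'
  have hl : 𝓝 x₀ ⊓ ae (ν.restrict s) ≤ 𝓝[s] x₀ :=
    inf_le_inf_left _ (le_principal_iff.2 (ae_restrict_mem hs))
  refine le_of_forall_lt_imp_le_of_dense fun a ha => ge_of_tendsto (hv.mono_left hl) ?_
  filter_upwards [(hg a ha).filter_mono inf_le_left, hle.filter_mono inf_le_right]
    with x hax hx using (hax.trans_le hx).le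

theorem MeasureTheory.lowerSemicontinuous_lintegral {X α : Type*} [TopologicalSpace X]
    [FirstCountableTopology X] [MeasurableSpace α] {μ : Measure α} {f : X → α → ℝ≥0∞}
    (hf : ∀ a, LowerSemicontinuous fun x => f x a) (hmeas : ∀ x, Measurable (f x)) :
    LowerSemicontinuous fun x => ∫⁻ a, f x a ∂μ :=
  lowerSemicontinuous_iff_le_liminf.2 fun x => calc
    ∫⁻ a, f x a ∂μ ≤ ∫⁻ a, liminf (fun x' => f x' a) (𝓝 x) ∂μ :=
      lintegral_mono fun a => ((hf a).lowerSemicontinuousAt x).le_liminf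
    _ ≤ liminf (fun x' => ∫⁻ a, f x' a ∂μ) (𝓝 x) := lintegral_liminf_le hmeas

theorem MeasureTheory.Measure.mem_support_restrict_of_mem_closure {X : Type*}
    [TopologicalSpace X] [MeasurableSpace X] [OpensMeasurableSpace X] {μ : Measure X}
    [μ.IsOpenPosMeasure] {s : Set X} {x : X} (hs : IsOpen s) (hx : x ∈ closure s) :
    x ∈ (μ.restrict s).support := by
  rw [Measure.mem_support_restrict, (nhdsWithin_basis_open x s).frequently_smallSets pos_mono]
  rintro U ⟨hxU, hU⟩
  exact (hU.inter hs).measure_pos μ (mem_closure_iff.1 hx U hU hxU)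

theorem MeasureTheory.lintegral_lintegral_mul_eq_top {α β : Type*} [MeasurableSpace α]
    [MeasurableSpace β] {μ : Measure α} {ν : Measure β} [SFinite μ] [SFinite ν] [NeZero ν]
    {f : β → ℝ≥0∞} {K : α → β → ℝ≥0∞} (hf : Measurable f) (hK : Measurable (Function.uncurry K))
    (hf0 : ∀ᵐ z ∂ν, f z ≠ 0) (hK_top : ∀ z, ∫⁻ y, K y z ∂μ = ⊤) :
    ∫⁻ y, ∫⁻ z, f z * K y z ∂ν ∂μ = ⊤ := by
  rw [lintegral_lintegral_swap ((hf.comp measurable_snd).mul hK).aemeasurable]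
  have h_inner : ∀ᵐ z ∂ν, ∫⁻ y, f z * K y z ∂μ = ⊤ := by
    filter_upwards [hf0] with z hz
    rw [lintegral_const_mul _ hK.of_uncurry_right, hK_top z, mul_top hz]
  rw [lintegral_congr_ae h_inner, lintegral_const, top_mul (NeZero.ne _)]

section Divergence

variable {E : Type*} [NormedAddCommGroup E] [NormedSpace ℝ E] [FiniteDimensional ℝ E]
  [MeasurableSpace E] [BorelSpace E] [Nontrivial E] (μ : Measure E) [μ.IsAddHaarMeasure]

theorem not_integrable_one_add_norm {r : ℝ} (hr : r ≤ finrank ℝ E) :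
    ¬ Integrable (fun x : E => (1 + ‖x‖) ^ (-r)) μ := by
  set d := finrank ℝ E
  have hd : 0 < d := finrank_pos
  rw [integrable_fun_norm_addHaar μ (f := fun t => (1 + t) ^ (-r))]
  intro h
  have hinv : IntegrableOn (fun t : ℝ => t ^ (-1 : ℝ)) (Ioi 1) := by
    refine ((h.mono_set (Ioi_subset_Ioi zero_le_one)).const_mul (2 ^ d)).mono'
      (by fun_prop) ?_
    filter_upwards [ae_restrict_mem measurableSet_Ioi] with t (ht : 1 < t)
    have ht0 : 0 < t := one_pos.trans ht
    calc ‖t ^ (-1 : ℝ)‖ = ((2 * t) ^ d)⁻¹ * (2 ^ d * t ^ (d - 1)) := by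
          rw [Real.norm_of_nonneg (by positivity), Real.rpow_neg_one, mul_pow]
          field_simp
          rw [← pow_succ', Nat.sub_add_cancel hd]
      _ ≤ (1 + t) ^ (-r) * (2 ^ d * t ^ (d - 1)) := by
          gcongr
          calc ((2 * t) ^ d)⁻¹ ≤ ((1 + t) ^ d)⁻¹ := by gcongr; linarith
            _ = (1 + t) ^ (-(d : ℝ)) := by rw [Real.rpow_neg (by positivity), Real.rpow_natCast]
            _ ≤ (1 + t) ^ (-r) := Real.rpow_le_rpow_of_exponent_le (by linarith) (by linarith)
      _ = 2 ^ d * (t ^ (d - 1) • (1 + t) ^ (-r)) := by rw [smul_eq_mul]; ring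
  exact lt_irrefl _ ((integrableOn_Ioi_rpow_iff one_pos).1 hinv)

theorem lintegral_one_add_norm_eq_top {r : ℝ} (hr : r ≤ finrank ℝ E) :
    ∫⁻ x, ENNReal.ofReal ((1 + ‖x‖) ^ (-r)) ∂μ = ⊤ := by
  by_contra hfin
  refine not_integrable_one_add_norm μ hr
    ⟨(by fun_prop : Measurable fun x : E => (1 + ‖x‖) ^ (-r)).aestronglyMeasurable, ?_⟩
  exact (hasFiniteIntegral_iff_ofReal (ae_of_all _ fun x => by positivity)).2
    (lt_top_iff_ne_top.2 hfin)

theorem lintegral_rpow_neg_mul_rpow_neg_eq_top {f g : E → ℝ} {α β c : ℝ} (hα : 0 ≤ α)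
    (hβ : 0 ≤ β) (hαβ : α + β ≤ finrank ℝ E) (hc : 0 < c) (hf : ∀ x, f x ≤ c * (1 + ‖x‖))
    (hg : ∀ x, g x ≤ c * (1 + ‖x‖)) :
    ∫⁻ x, ENNReal.ofReal (f x) ^ (-α) * ENNReal.ofReal (g x) ^ (-β) ∂μ = ⊤ := by
  have hlow : ∀ x, ENNReal.ofReal (c ^ (-(α + β))) *
      ENNReal.ofReal ((1 + ‖x‖) ^ (-(finrank ℝ E : ℝ))) ≤
      ENNReal.ofReal (f x) ^ (-α) * ENNReal.ofReal (g x) ^ (-β) := by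
    intro x
    have hR : 0 < c * (1 + ‖x‖) := by positivity
    calc ENNReal.ofReal (c ^ (-(α + β))) * ENNReal.ofReal ((1 + ‖x‖) ^ (-(finrank ℝ E : ℝ)))
        ≤ ENNReal.ofReal (c ^ (-(α + β)) * (1 + ‖x‖) ^ (-(α + β))) := by
          rw [← ENNReal.ofReal_mul (by positivity)]
          gcongr
          exact le_add_of_nonneg_right (norm_nonneg x)
      _ = ENNReal.ofReal (c * (1 + ‖x‖)) ^ (-α) * ENNReal.ofReal (c * (1 + ‖x‖)) ^ (-β) := by
          rw [← Real.mul_rpow hc.le (by positivity), ENNReal.ofReal_rpow_of_pos hR,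
            ENNReal.ofReal_rpow_of_pos hR, ← ENNReal.ofReal_mul (by positivity),
            ← Real.rpow_add hR, neg_add]
      _ ≤ ENNReal.ofReal (f x) ^ (-α) * ENNReal.ofReal (g x) ^ (-β) :=
          mul_le_mul'
            (ENNReal.rpow_le_rpow_of_nonpos (by linarith) (ENNReal.ofReal_le_ofReal (hf x)))
            (ENNReal.rpow_le_rpow_of_nonpos (by linarith) (ENNReal.ofReal_le_ofReal (hg x)))
  refine top_le_iff.1 ((lintegral_mono hlow).trans' ?_)
  rw [lintegral_const_mul' _ _ ofReal_ne_top, lintegral_one_add_norm_eq_top μ le_rfl,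
    mul_top (ofReal_pos.2 (by positivity)).ne']

end Divergence

section Coordinates

variable {N : ℕ}

@[simp]
theorem up_apply (y' : EuclideanSpace ℝ (Fin (N - 1))) (t : ℝ) (i : Fin N) :
    up N y' t i = if h : (i : ℕ) < N - 1 then y' ⟨i, h⟩ else t := by
  simp [up]

theorem ht_up (hN : 1 ≤ N) (y' : EuclideanSpace ℝ (Fin (N - 1))) (t : ℝ) :
    ht N (up N y' t) = t := by
  simp [ht, show N - 1 < N by omega]

theorem norm_up_zero (y' : EuclideanSpace ℝ (Fin (N - 1))) : ‖up N y' 0‖ = ‖y'‖ := by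
  rw [EuclideanSpace.norm_eq, EuclideanSpace.norm_eq]
  congr 1
  refine (Fintype.sum_of_injective (Fin.castLE (Nat.sub_le N 1)) (Fin.castLE_injective _) _ _
    (fun i hi => ?_) fun j => by simp).symm
  have : ¬ (i : ℕ) < N - 1 := fun h => hi ⟨⟨i, h⟩, rfl⟩
  simp [this]

theorem continuous_up :
    Continuous fun q : EuclideanSpace ℝ (Fin (N - 1)) × ℝ => up N q.1 q.2 := by
  refine (PiLp.continuous_toLp 2 _).comp (continuous_pi fun i => ?_)
  split_ifs
  · exact (PiLp.continuous_apply 2 _ _).comp continuous_fst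
  · exact continuous_snd

theorem isOpen_upperHalf : IsOpen (upperHalf N) := by
  refine isOpen_Ioi.preimage (f := ht N) ?_
  unfold ht
  split_ifs
  · exact PiLp.continuous_apply 2 _ _
  · exact continuous_const

theorem up_mem_upperHalf (hN : 1 ≤ N) (y' : EuclideanSpace ℝ (Fin (N - 1))) {t : ℝ}
    (h : 0 < t) : up N y' t ∈ upperHalf N := by
  show 0 < ht N _
  rwa [ht_up hN]

theorem up_zero_mem_closure_upperHalf (hN : 1 ≤ N) (y' : EuclideanSpace ℝ (Fin (N - 1))) :
    up N y' 0 ∈ closure (upperHalf N) :=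
  mem_closure_of_tendsto (b := 𝓝[>] 0)
    (((continuous_up.comp (Continuous.prodMk_right y')).tendsto 0).mono_left nhdsWithin_le_nhds)
    (eventually_nhdsWithin_of_forall fun _ h => up_mem_upperHalf hN y' h)

end Coordinates

theorem sphereArea_pos {N : ℕ} (hN : 0 < N) : 0 < sphereArea N :=
  mul_pos (Nat.cast_pos.2 hN)
    (ENNReal.toReal_pos (Metric.measure_ball_pos _ _ one_pos).ne' measure_ball_lt_top.ne)

section PositiveSolution

variable {N : ℕ} {p lam k : ℝ} {μ : Measure (EuclideanSpace ℝ (Fin N))}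
  {u : EuclideanSpace ℝ (Fin N) → ℝ}

theorem IsPosSolution.ae_pos_boundary (hN : 3 ≤ N) (hμ : μ ≠ 0)
    (hu : IsPosSolution N p lam k μ u) :
    ∀ᵐ x' ∂(volume : Measure (EuclideanSpace ℝ (Fin (N - 1)))), 0 < u (up N x' 0) := by
  obtain ⟨-, -, htend, -, -, heq⟩ := hu
  have hN' : (3 : ℝ) ≤ N := by exact_mod_cast hN
  have hC : 0 < ((N : ℝ) - 2) * sphereArea N :=
    mul_pos (by linarith) (sphereArea_pos (by omega))
  set g : EuclideanSpace ℝ (Fin N) → ℝ≥0∞ := fun x => ∫⁻ y,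
    ENNReal.ofReal (((N : ℝ) - 2) * sphereArea N)⁻¹ * ENNReal.ofReal ‖x - y‖ ^ ((2:ℝ) - N) ∂μ
  have hg_le : ∀ᵐ x ∂volume.restrict (upperHalf N), g x ≤ ENNReal.ofReal (u x) := by
    filter_upwards [heq] with x hx
    rw [hx]
    exact (lintegral_const_mul' _ _ ofReal_ne_top).trans_le
      (le_add_right (by gcongr; exact le_self_add))
  have hg_lsc : LowerSemicontinuous g :=
    lowerSemicontinuous_lintegral (fun y => Continuous.lowerSemicontinuous
      ((ENNReal.continuous_const_mul ofReal_ne_top).comp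
        (ENNReal.continuous_rpow_const.comp (ENNReal.continuous_ofReal.comp (by fun_prop)))))
      (fun x => by fun_prop)
  have hg_pos : ∀ x, 0 < g x := by
    intro x
    rw [lintegral_pos_iff_support (by fun_prop), Function.support_eq_univ fun y => ?_]
    · exact Measure.measure_univ_pos.2 hμ
    refine mul_ne_zero (ofReal_pos.2 (inv_pos.2 hC)).ne' ?_
    rw [Ne, ENNReal.rpow_eq_zero_iff]
    rintro (⟨-, hneg⟩ | ⟨htop, -⟩)
    · linarith
    · exact ofReal_ne_top htop
  filter_upwards [htend] with x' hx'
  have hle := (hg_lsc.lowerSemicontinuousAt _).le_of_ae_restrict_le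
    isOpen_upperHalf.measurableSet
    (Measure.mem_support_restrict_of_mem_closure isOpen_upperHalf
      (up_zero_mem_closure_upperHalf (by omega) x'))
    ((ENNReal.continuous_ofReal.tendsto _).comp hx') hg_le
  exact ENNReal.ofReal_pos.1 ((hg_pos _).trans_le hle)

theorem lintegral_Hu_mul_eq_top (hN : 3 ≤ N) (hk0 : 0 < k) (hk1 : k ≤ 1) (hu : Measurable u)
    (hpos : ∀ᵐ x' ∂(volume : Measure (EuclideanSpace ℝ (Fin (N - 1)))), 0 < u (up N x' 0))
    (x : EuclideanSpace ℝ (Fin N)) :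
    ∫⁻ y', Hu N p k u y' * ENNReal.ofReal ‖x - up N y' 0‖ ^ ((2:ℝ) - N) = ⊤ := by
  have : Nontrivial (EuclideanSpace ℝ (Fin (N - 1))) :=
    Module.nontrivial_of_finrank_pos (by rw [finrank_euclideanSpace_fin]; omega)
  have hup : Measurable fun y' : EuclideanSpace ℝ (Fin (N - 1)) => up N y' 0 :=
    (continuous_up.comp (Continuous.prodMk_left 0)).measurable
  have hdiv : ∀ z', ∫⁻ y', ENNReal.ofReal ‖y' - z'‖ ^ (-k) *
      ENNReal.ofReal ‖x - up N y' 0‖ ^ ((2:ℝ) - N) = ⊤ := by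
    intro z'
    have hN' : (3 : ℝ) ≤ N := by exact_mod_cast hN
    rw [show (2:ℝ) - N = -((N : ℝ) - 2) by ring]
    refine lintegral_rpow_neg_mul_rpow_neg_eq_top volume hk0.le ?_ ?_ (c := 1 + ‖z'‖ + ‖x‖)
      (by positivity) (fun y' => ?_) (fun y' => ?_)
    · linarith
    · rw [finrank_euclideanSpace_fin, Nat.cast_sub (by omega)]
      push_cast
      linarith
    · nlinarith [norm_sub_le y' z', norm_nonneg y', norm_nonneg z', norm_nonneg x]
    · nlinarith [norm_sub_le x (up N y' 0), norm_up_zero (N := N) y', norm_nonneg y',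
        norm_nonneg z', norm_nonneg x]
  calc _ = ∫⁻ y', ∫⁻ z', ENNReal.ofReal (u (up N z' 0)) ^ p * (ENNReal.ofReal ‖y' - z'‖ ^ (-k) *
          ENNReal.ofReal ‖x - up N y' 0‖ ^ ((2:ℝ) - N)) := by
        refine lintegral_congr fun y' => ?_
        rw [Hu, ← lintegral_mul_const _ (by fun_prop)]
        simp only [mul_assoc]
    _ = ⊤ := lintegral_lintegral_mul_eq_top (by fun_prop) (by fun_prop)
        (hpos.mono fun z' hz' => (ENNReal.rpow_pos (ofReal_pos.2 hz') ofReal_ne_top).ne') hdiv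

end PositiveSolution

theorem no_solution_mu_ne_zero_k_le_one_general
    (N : ℕ) (hN : 3 ≤ N)
    (μ : Measure (EuclideanSpace ℝ (Fin N))) (hμ : AdmissibleMeasure N μ)
    (k p lam : ℝ) (hk0 : 0 < k) (hk1 : k ≤ 1) :
    ¬ ∃ u : EuclideanSpace ℝ (Fin N) → ℝ, IsPosSolution N p lam k μ u := by
  rintro ⟨u, hu⟩
  have htrace := hu.ae_pos_boundary hN hμ.1
  obtain ⟨hmeas, -, -, -, hfin, -⟩ := hu
  have hvol : volume (upperHalf N) ≠ 0 :=
    isOpen_upperHalf.measure_ne_zero volume ⟨up N 0 1, up_mem_upperHalf (by omega) 0 one_pos⟩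
  obtain ⟨x, -, hx⟩ := Measure.exists_mem_of_measure_ne_zero_of_ae hvol hfin
  exact hx.ne (lintegral_Hu_mul_eq_top hN hk0 hk1 hmeas htrace x)

/-- Theorem 1.1(i1): if `0 < k ≤ 1` and `p > 0` then, for every `λ > 0`, problem (1.1)
with a nonzero admissible measure `μ` has no positive solution. -/
theorem no_solution_mu_ne_zero_k_le_one
    (N : ℕ) (hN : 3 ≤ N)
    (μ : Measure (EuclideanSpace ℝ (Fin N))) (hμ : AdmissibleMeasure N μ)
    (k p lam : ℝ) (hk0 : 0 < k) (hk1 : k ≤ 1) (hp : 0 < p) (hlam : 0 < lam) :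
    ¬ ∃ u : EuclideanSpace ℝ (Fin N) → ℝ, IsPosSolution N p lam k μ u :=
  no_solution_mu_ne_zero_k_le_one_general N hN μ hμ k p lam hk0 hk1

end
end

section
/- Let N ≥ 3 and 1 < k < N-1 < β. Then there exists a constant C₁ = C₁(N,k,β) > 0 such that ∫_{ℝ^{N-1}} |y'-z'|^{-k} (1+|z'|)^{-β} dz' ≤ C₁ (1+|y'|)^{-k} for all y' ∈ ℝ^{N-1}. -/
open MeasureTheory ENNReal Filter

noncomputable section

/-!
Split `ℝⁿ` at the ball of radius `R / 2` about `y`, where `R = 1 + ‖y‖`. On the ball,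
`1 + ‖z‖ ≥ R / 2`, and by translation and scaling the kernel `‖y - z‖ ^ (-k)` integrates
over it to a multiple of `R ^ (n - k)`; this gives `R ^ (n - k - β) ≤ R ^ (-k)` as `β > n`.
Off the ball, `‖y - z‖ ^ (-k) ≤ 2 ^ k R ^ (-k)`, and `(1 + ‖z‖) ^ (-β)` is integrable as `β > n`.
-/

open Metric Set Module

section

variable {E : Type*} [NormedAddCommGroup E] [MeasurableSpace E] [BorelSpace E] (μ : Measure E)

theorem setLIntegral_ball_comp_norm_sub [μ.IsAddRightInvariant] (f : ℝ → ℝ≥0∞) (y : E) (ρ : ℝ) :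
    ∫⁻ z in ball y ρ, f ‖y - z‖ ∂μ = ∫⁻ z in ball 0 ρ, f ‖z‖ ∂μ := by
  have hpre : (· - y) ⁻¹' ball (0 : E) ρ = ball y ρ := by ext z; simp [dist_eq_norm]
  have := (measurePreserving_sub_right μ y).setLIntegral_comp_preimage_emb
    (MeasurableEquiv.subRight y).measurableEmbedding (fun z => f ‖z‖) (ball 0 ρ)
  rw [← this, hpre]
  simp only [norm_sub_rev y]

theorem setLIntegral_compl_ball_norm_sub_rpow_mul_le {k : ℝ} (hk : 0 ≤ k) (β : ℝ) (y : E) :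
    ∫⁻ z in (ball y ((1 + ‖y‖) / 2))ᶜ,
        ENNReal.ofReal ‖y - z‖ ^ (-k) * ENNReal.ofReal (1 + ‖z‖) ^ (-β) ∂μ ≤
      ENNReal.ofReal (2 ^ k * (1 + ‖y‖) ^ (-k)) * ∫⁻ z, ENNReal.ofReal (1 + ‖z‖) ^ (-β) ∂μ := by
  set R := 1 + ‖y‖
  have hρ : 0 < R / 2 := by positivity
  have hkernel : ∀ z ∈ (ball y (R / 2))ᶜ,
      ENNReal.ofReal ‖y - z‖ ^ (-k) ≤ ENNReal.ofReal (2 ^ k * R ^ (-k)) := by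
    intro z hz
    have hzy : R / 2 ≤ ‖y - z‖ := by simpa [dist_eq_norm, norm_sub_rev] using hz
    have hscale : 2 ^ k * R ^ (-k) = (R / 2) ^ (-k) := by
      rw [Real.div_rpow (by positivity) zero_le_two, Real.rpow_neg zero_le_two, div_inv_eq_mul,
        mul_comm]
    rw [ENNReal.ofReal_rpow_of_pos (hρ.trans_le hzy), hscale]
    exact ENNReal.ofReal_le_ofReal (Real.rpow_le_rpow_of_nonpos hρ hzy (by linarith))
  calc ∫⁻ z in (ball y (R / 2))ᶜ,
        ENNReal.ofReal ‖y - z‖ ^ (-k) * ENNReal.ofReal (1 + ‖z‖) ^ (-β) ∂μ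
      ≤ ∫⁻ z in (ball y (R / 2))ᶜ,
          ENNReal.ofReal (2 ^ k * R ^ (-k)) * ENNReal.ofReal (1 + ‖z‖) ^ (-β) ∂μ :=
        setLIntegral_mono' measurableSet_ball.compl fun z hz => by gcongr; exact hkernel z hz
    _ ≤ ENNReal.ofReal (2 ^ k * R ^ (-k)) * ∫⁻ z, ENNReal.ofReal (1 + ‖z‖) ^ (-β) ∂μ := by
        rw [lintegral_const_mul' _ _ ENNReal.ofReal_ne_top]
        gcongr
        exact Measure.restrict_le_self

variable [NormedSpace ℝ E] [FiniteDimensional ℝ E] [μ.IsAddHaarMeasure]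

theorem lintegral_comp_smul_addHaar (f : E → ℝ≥0∞) {r : ℝ} (hr : r ≠ 0) :
    ∫⁻ x, f (r • x) ∂μ = ENNReal.ofReal |(r ^ finrank ℝ E)⁻¹| * ∫⁻ x, f x ∂μ := by
  rw [← smul_eq_mul, ← lintegral_smul_measure, ← Measure.map_addHaar_smul μ hr]
  exact (lintegral_map_equiv f (MeasurableEquiv.smul₀ r hr)).symm

theorem setLIntegral_ball_norm_rpow_neg (k : ℝ) {ρ : ℝ} (hρ : 0 < ρ) :
    ∫⁻ z in ball (0 : E) ρ, ENNReal.ofReal ‖z‖ ^ (-k) ∂μ =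
      ENNReal.ofReal ρ ^ ((finrank ℝ E : ℝ) - k) *
        ∫⁻ z in ball (0 : E) 1, ENNReal.ofReal ‖z‖ ^ (-k) ∂μ := by
  set g : E → ℝ≥0∞ := fun z => ENNReal.ofReal ‖z‖ ^ (-k)
  have hg : ∀ x : E, (ball (0 : E) ρ).indicator g (ρ • x) =
      ENNReal.ofReal ρ ^ (-k) * (ball (0 : E) 1).indicator g x := by
    intro x
    have hmem : ρ • x ∈ ball (0 : E) ρ ↔ x ∈ ball (0 : E) 1 := by
      simp [norm_smul, abs_of_pos hρ, hρ]
    by_cases hx : x ∈ ball (0 : E) 1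
    · rw [indicator_of_mem (hmem.2 hx), indicator_of_mem hx]
      simp only [g, norm_smul, Real.norm_of_nonneg hρ.le, ENNReal.ofReal_mul hρ.le]
      exact ENNReal.mul_rpow_of_ne_top ENNReal.ofReal_ne_top ENNReal.ofReal_ne_top _
    · rw [indicator_of_notMem (mt hmem.1 hx), indicator_of_notMem hx, mul_zero]
  have hscale := lintegral_comp_smul_addHaar μ ((ball (0 : E) ρ).indicator g) hρ.ne'
  simp only [hg] at hscale
  rw [lintegral_const_mul' _ _ (by simp [hρ]), lintegral_indicator measurableSet_ball,
    lintegral_indicator measurableSet_ball] at hscale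
  have hpow : ENNReal.ofReal ρ ^ ((finrank ℝ E : ℝ) - k) =
      ENNReal.ofReal (ρ ^ finrank ℝ E) * ENNReal.ofReal ρ ^ (-k) := by
    rw [sub_eq_add_neg, ENNReal.rpow_add _ _ (by simp [hρ]) ENNReal.ofReal_ne_top,
      ENNReal.rpow_natCast, ENNReal.ofReal_pow hρ.le]
  rw [abs_of_pos (by positivity), ENNReal.ofReal_inv_of_pos (by positivity)] at hscale
  rw [hpow, mul_assoc, hscale, ← mul_assoc,
    ENNReal.mul_inv_cancel (by simp [hρ]) ENNReal.ofReal_ne_top, one_mul]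

theorem setLIntegral_ball_norm_rpow_neg_lt_top [Nontrivial E] {k : ℝ} (hk : k < finrank ℝ E)
    (ρ : ℝ) : ∫⁻ z in ball (0 : E) ρ, ENNReal.ofReal ‖z‖ ^ (-k) ∂μ < ∞ := by
  have hint : IntegrableOn (fun z : E => ‖z‖ ^ (-k)) (ball 0 ρ) μ :=
    integrableOn_ball_of_norm_le_rpow finrank_pos hk (C := 1)
      (.of_forall fun z => by simp [abs_of_nonneg (Real.rpow_nonneg (norm_nonneg z) _)])
      (measurable_norm.pow_const _).aestronglyMeasurable
  calc ∫⁻ z in ball (0 : E) ρ, ENNReal.ofReal ‖z‖ ^ (-k) ∂μ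
      = ∫⁻ z in ball (0 : E) ρ, ‖‖z‖ ^ (-k)‖ₑ ∂μ := by
        refine lintegral_congr_ae ?_
        filter_upwards [ae_restrict_of_ae (Measure.ae_ne μ 0)] with z hz
        rw [Real.enorm_of_nonneg (by positivity), ENNReal.ofReal_rpow_of_pos (norm_pos_iff.2 hz)]
    _ < ∞ := hint.2

theorem lintegral_one_add_norm_rpow_neg_lt_top {β : ℝ} (hβ : finrank ℝ E < β) :
    ∫⁻ z, ENNReal.ofReal (1 + ‖z‖) ^ (-β) ∂μ < ∞ := by
  simp_rw [fun z : E => ENNReal.ofReal_rpow_of_pos (x := 1 + ‖z‖) (p := -β) (by positivity)]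
  exact finite_integral_one_add_norm hβ

theorem setLIntegral_ball_norm_sub_rpow_mul_le {k β : ℝ} (hk : k ≤ finrank ℝ E)
    (hβ : finrank ℝ E ≤ β) (y : E) :
    ∫⁻ z in ball y ((1 + ‖y‖) / 2),
        ENNReal.ofReal ‖y - z‖ ^ (-k) * ENNReal.ofReal (1 + ‖z‖) ^ (-β) ∂μ ≤
      ENNReal.ofReal (2 ^ β * (1 + ‖y‖) ^ (-k)) *
        ∫⁻ z in ball (0 : E) 1, ENNReal.ofReal ‖z‖ ^ (-k) ∂μ := by
  set R := 1 + ‖y‖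
  have hR : 1 ≤ R := le_add_of_nonneg_right (norm_nonneg y)
  have hρ : 0 < R / 2 := by positivity
  have hweight : ∀ z ∈ ball y (R / 2),
      ENNReal.ofReal (1 + ‖z‖) ^ (-β) ≤ ENNReal.ofReal ((R / 2) ^ (-β)) := by
    intro z hz
    rw [mem_ball, dist_eq_norm] at hz
    have hzy : R / 2 ≤ 1 + ‖z‖ := by
      linarith [norm_sub_norm_le y z, norm_sub_rev y z]
    rw [ENNReal.ofReal_rpow_of_pos (by positivity)]
    exact ENNReal.ofReal_le_ofReal (Real.rpow_le_rpow_of_nonpos hρ hzy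
      (by linarith [(finrank ℝ E).cast_nonneg (α := ℝ)]))
  have hexp : (R / 2) ^ (-β) * (R / 2) ^ ((finrank ℝ E : ℝ) - k) ≤ 2 ^ β * R ^ (-k) := by
    rw [← Real.rpow_add hρ, Real.div_rpow (by positivity) zero_le_two, div_eq_mul_inv,
      ← Real.rpow_neg zero_le_two, mul_comm]
    exact mul_le_mul (Real.rpow_le_rpow_of_exponent_le one_le_two (by linarith))
      (Real.rpow_le_rpow_of_exponent_le hR (by linarith)) (by positivity) (by positivity)
  calc ∫⁻ z in ball y (R / 2),
        ENNReal.ofReal ‖y - z‖ ^ (-k) * ENNReal.ofReal (1 + ‖z‖) ^ (-β) ∂μ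
      ≤ ∫⁻ z in ball y (R / 2),
          ENNReal.ofReal ((R / 2) ^ (-β)) * ENNReal.ofReal ‖y - z‖ ^ (-k) ∂μ :=
        setLIntegral_mono' measurableSet_ball fun z hz => by
          rw [mul_comm]; gcongr; exact hweight z hz
    _ = ENNReal.ofReal ((R / 2) ^ (-β)) * (ENNReal.ofReal (R / 2) ^ ((finrank ℝ E : ℝ) - k) *
          ∫⁻ z in ball (0 : E) 1, ENNReal.ofReal ‖z‖ ^ (-k) ∂μ) := by
        rw [lintegral_const_mul' _ _ ENNReal.ofReal_ne_top,
          setLIntegral_ball_comp_norm_sub μ (fun t => ENNReal.ofReal t ^ (-k)),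
          setLIntegral_ball_norm_rpow_neg μ k hρ]
    _ ≤ ENNReal.ofReal (2 ^ β * R ^ (-k)) *
          ∫⁻ z in ball (0 : E) 1, ENNReal.ofReal ‖z‖ ^ (-k) ∂μ := by
        rw [← mul_assoc, ENNReal.ofReal_rpow_of_pos hρ, ← ENNReal.ofReal_mul (by positivity)]
        gcongr

theorem exists_lintegral_norm_sub_rpow_mul_le {k β : ℝ} (hk : 0 ≤ k) (hkd : k < finrank ℝ E)
    (hβ : finrank ℝ E < β) :
    ∃ C > 0, ∀ y : E,
      ∫⁻ z, ENNReal.ofReal ‖y - z‖ ^ (-k) * ENNReal.ofReal (1 + ‖z‖) ^ (-β) ∂μ ≤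
        ENNReal.ofReal (C * (1 + ‖y‖) ^ (-k)) := by
  have : Nontrivial E :=
    Module.nontrivial_of_finrank_pos (R := ℝ) (by exact_mod_cast hk.trans_lt hkd)
  set c := ∫⁻ z in ball (0 : E) 1, ENNReal.ofReal ‖z‖ ^ (-k) ∂μ
  set T := ∫⁻ z, ENNReal.ofReal (1 + ‖z‖) ^ (-β) ∂μ
  set A := ENNReal.ofReal (2 ^ β) * c + ENNReal.ofReal (2 ^ k) * T
  have hA : A ≠ ∞ := by
    have := (setLIntegral_ball_norm_rpow_neg_lt_top μ hkd 1).ne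
    have := (lintegral_one_add_norm_rpow_neg_lt_top μ hβ).ne
    finiteness
  refine ⟨A.toReal + 1, by positivity, fun y => ?_⟩
  rw [← lintegral_add_compl _ (measurableSet_ball (x := y) (ε := (1 + ‖y‖) / 2))]
  calc _ ≤ ENNReal.ofReal (2 ^ β * (1 + ‖y‖) ^ (-k)) * c +
        ENNReal.ofReal (2 ^ k * (1 + ‖y‖) ^ (-k)) * T :=
        add_le_add (setLIntegral_ball_norm_sub_rpow_mul_le μ hkd.le hβ.le y)
          (setLIntegral_compl_ball_norm_sub_rpow_mul_le μ hk β y)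
    _ = A * ENNReal.ofReal ((1 + ‖y‖) ^ (-k)) := by
        rw [ENNReal.ofReal_mul (by positivity), ENNReal.ofReal_mul (by positivity)]
        ring
    _ ≤ ENNReal.ofReal (A.toReal + 1) * ENNReal.ofReal ((1 + ‖y‖) ^ (-k)) := by
        gcongr
        exact (ENNReal.le_ofReal_iff_toReal_le hA (by positivity)).2 (by linarith)
    _ = _ := (ENNReal.ofReal_mul (by positivity)).symm

end

theorem integral_estimate_one_general
    (N : ℕ) (k β : ℝ)
    (hk1 : 1 < k) (hkN : k < (N : ℝ) - 1) (hβ : (N : ℝ) - 1 < β) :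
    ∃ C > 0, ∀ y' : EuclideanSpace ℝ (Fin (N - 1)),
      (∫⁻ z', ENNReal.ofReal ‖y' - z'‖ ^ (-k) * ENNReal.ofReal (1 + ‖z'‖) ^ (-β)) ≤
        ENNReal.ofReal (C * (1 + ‖y'‖) ^ (-k)) := by
  have hN : 1 ≤ N := by exact_mod_cast (show (1 : ℝ) ≤ N by linarith)
  have hdim : (finrank ℝ (EuclideanSpace ℝ (Fin (N - 1))) : ℝ) = (N : ℝ) - 1 := by
    rw [finrank_euclideanSpace_fin, Nat.cast_sub hN, Nat.cast_one]
  exact exists_lintegral_norm_sub_rpow_mul_le volume (by linarith) (hdim ▸ hkN) (hdim ▸ hβ)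

/-- Lemma 2.5: if `1 < k < N-1 < β` then there is `C₁ = C₁(N,k,β) > 0` with
`∫_{ℝ^{N-1}} |y'-z'|^{-k} (1+|z'|)^{-β} dz' ≤ C₁ (1+|y'|)^{-k}` for all `y' ∈ ℝ^{N-1}`. -/
theorem integral_estimate_one
    (N : ℕ) (hN : 3 ≤ N) (k β : ℝ)
    (hk1 : 1 < k) (hkN : k < (N : ℝ) - 1) (hβ : (N : ℝ) - 1 < β) :
    ∃ C > 0, ∀ y' : EuclideanSpace ℝ (Fin (N - 1)),
      (∫⁻ z', ENNReal.ofReal ‖y' - z'‖ ^ (-k) * ENNReal.ofReal (1 + ‖z'‖) ^ (-β)) ≤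
        ENNReal.ofReal (C * (1 + ‖y'‖) ^ (-k)) :=
  integral_estimate_one_general N k β hk1 hkN hβ
end
end

section
/- Let N ≥ 3 and 1 < k < N-1. Then there exists a constant C₂ = C₂(N,k) > 0 such that ∫_{ℝ^{N-1}} |x-(y',0)|^{-(N-2)} (1+|y'|)^{-k} dy' ≤ C₂ (1+|x|)^{1-k} for all x ∈ ℝ^N. -/
open MeasureTheory ENNReal Filter

noncomputable section

/-!
Write `R = 1 + ‖x‖` and split `ℝ^{N-1}` into three regions. On `‖y'‖ < R/2 - 1` the point
`(y', 0)` stays at distance `≥ R/2` from `x`, so the integral is at most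
`(R/2)^{2-N} ∫_{‖y'‖ < R/2} ‖y'‖^{-k}`, finite as `k < N - 1`. On the annulus
`R/2 - 1 ≤ ‖y'‖ < 2R` the weight is at most `(R/2)^{-k}`, and `|x - (y',0)| ≥ ‖x' - y'‖` leaves
the integrable singularity `∫_{‖y' - x'‖ < 3R} ‖x' - y'‖^{2-N}`. On `‖y'‖ ≥ 2R` one has
`|x - (y',0)| ≥ ‖y'‖/2`, leaving `∫_{‖y'‖ ≥ 2R} ‖y'‖^{2-N-k}`, which converges because `k > 1`.
By the scaling `y' ↦ r y'` of Lebesgue measure, each of these three integrals is a finite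
integral over the unit ball or its complement times `R^{1-k}`.
-/
open Metric Set Module
open scoped Pointwise

theorem ENNReal.rpow_le_rpow_of_nonpos_s13 {x y : ℝ≥0∞} {z : ℝ} (hxy : x ≤ y) (hz : z ≤ 0) :
    y ^ z ≤ x ^ z := by
  rw [← neg_neg z, ENNReal.rpow_neg y, ENNReal.rpow_neg x]
  exact ENNReal.inv_le_inv.mpr (ENNReal.rpow_le_rpow hxy (neg_nonneg.mpr hz))

theorem ENNReal.ofReal_mul_rpow {c : ℝ} (hc : 0 ≤ c) (t e : ℝ) :
    ENNReal.ofReal (c * t) ^ e = ENNReal.ofReal c ^ e * ENNReal.ofReal t ^ e := by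
  rw [ENNReal.ofReal_mul hc, ENNReal.mul_rpow_of_ne_top ENNReal.ofReal_ne_top ENNReal.ofReal_ne_top]

theorem ENNReal.ofReal_rpow_ne_top {c : ℝ} (hc : 0 < c) (e : ℝ) : ENNReal.ofReal c ^ e ≠ ∞ :=
  ENNReal.rpow_ne_top_of_ne_zero (ENNReal.ofReal_pos.mpr hc).ne' ENNReal.ofReal_ne_top

theorem one_sub_finrank_nonpos (F : Type*) [AddCommGroup F] [Module ℝ F] [Module.Finite ℝ F]
    [Nontrivial F] : 1 - (finrank ℝ F : ℝ) ≤ 0 :=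
  sub_nonpos.mpr (by exact_mod_cast finrank_pos)

theorem setLIntegral_ball_comp_sub {G : Type*} [NormedAddCommGroup G] [MeasurableSpace G]
    [BorelSpace G] (μ : Measure G) [μ.IsAddRightInvariant] (f : G → ℝ≥0∞) (p : G) (r : ℝ) :
    ∫⁻ y in ball p r, f (y - p) ∂μ = ∫⁻ z in ball 0 r, f z ∂μ := by
  have hpre : (· - p) ⁻¹' ball 0 r = ball p r := by
    ext y; simp [dist_eq_norm]
  rw [← hpre, (measurePreserving_sub_right μ p).setLIntegral_comp_preimage_emb
    (measurableEmbedding_subRight p)]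

section Scaling

variable {F : Type*} [NormedAddCommGroup F] [NormedSpace ℝ F] [FiniteDimensional ℝ F]
  [MeasurableSpace F] [BorelSpace F] (μ : Measure F) [μ.IsAddHaarMeasure]

theorem setLIntegral_norm_rpow_smul_set (a : ℝ) {r : ℝ} (hr : 0 < r) (s : Set F) :
    ∫⁻ z in r • s, ENNReal.ofReal ‖z‖ ^ a ∂μ =
      ENNReal.ofReal r ^ (finrank ℝ F + a) * ∫⁻ z in s, ENNReal.ofReal ‖z‖ ^ a ∂μ := by
  let e := (Homeomorph.smulOfNeZero (α := F) r hr.ne').toMeasurableEquiv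
  have hpre : e ⁻¹' (r • s) = s := by
    ext z; exact smul_mem_smul_set_iff₀ hr.ne' s z
  have hmap : ∫⁻ z in r • s, ENNReal.ofReal ‖z‖ ^ a ∂(Measure.map (r • ·) μ) =
      ENNReal.ofReal r ^ a * ∫⁻ z in s, ENNReal.ofReal ‖z‖ ^ a ∂μ := by
    rw [show (r • · : F → F) = e from rfl, e.restrict_map, lintegral_map_equiv, hpre,
      ← lintegral_const_mul' _ _ (ENNReal.ofReal_rpow_ne_top hr a)]
    simp [e, norm_smul, Real.norm_of_nonneg hr.le, ENNReal.ofReal_mul_rpow hr.le]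
  rw [Measure.map_addHaar_smul μ hr.ne', Measure.restrict_smul, lintegral_smul_measure,
    smul_eq_mul, abs_inv, abs_of_pos (pow_pos hr _), ENNReal.ofReal_inv_of_pos (pow_pos hr _),
    ENNReal.ofReal_pow hr.le, ← ENNReal.rpow_natCast] at hmap
  have hr0 : ENNReal.ofReal r ≠ 0 := (ENNReal.ofReal_pos.mpr hr).ne'
  have hrd0 : ENNReal.ofReal r ^ (finrank ℝ F : ℝ) ≠ 0 := by simp [hr0]
  rw [ENNReal.rpow_add _ _ hr0 ENNReal.ofReal_ne_top, mul_assoc, ← hmap, ← mul_assoc,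
    ENNReal.mul_inv_cancel hrd0 (ENNReal.ofReal_rpow_ne_top hr _), one_mul]

theorem setLIntegral_ball_norm_rpow (a : ℝ) {r : ℝ} (hr : 0 < r) :
    ∫⁻ z in ball 0 r, ENNReal.ofReal ‖z‖ ^ a ∂μ =
      ENNReal.ofReal r ^ (finrank ℝ F + a) * ∫⁻ z in ball 0 1, ENNReal.ofReal ‖z‖ ^ a ∂μ := by
  rw [← smul_unitBall_of_pos hr, setLIntegral_norm_rpow_smul_set μ a hr]

theorem setLIntegral_compl_ball_norm_rpow (a : ℝ) {r : ℝ} (hr : 0 < r) :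
    ∫⁻ z in (ball 0 r)ᶜ, ENNReal.ofReal ‖z‖ ^ a ∂μ =
      ENNReal.ofReal r ^ (finrank ℝ F + a) * ∫⁻ z in (ball 0 1)ᶜ, ENNReal.ofReal ‖z‖ ^ a ∂μ := by
  rw [← smul_unitBall_of_pos hr, ← setLIntegral_norm_rpow_smul_set μ a hr]
  congr 2
  exact (Set.smul_set_compl (a := Units.mk0 r hr.ne')).symm

theorem setLIntegral_unitBall_norm_rpow_lt_top [Nontrivial F] {a : ℝ}
    (ha : -(finrank ℝ F : ℝ) < a) :
    ∫⁻ z in ball 0 1, ENNReal.ofReal ‖z‖ ^ a ∂μ < ∞ := by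
  have hint : IntegrableOn (fun z : F => ‖z‖ ^ a) (ball 0 1) μ :=
    integrableOn_ball_of_norm_le_rpow finrank_pos (neg_lt.mp ha) (C := 1)
      (.of_forall fun z => by simp [abs_of_nonneg (Real.rpow_nonneg (norm_nonneg z) _)])
      (measurable_norm.pow_const _).aestronglyMeasurable
  refine lt_of_eq_of_lt (setLIntegral_congr_fun_ae measurableSet_ball ?_) hint.setLIntegral_lt_top
  filter_upwards [Measure.ae_ne μ 0] with z hz _
  exact ENNReal.ofReal_rpow_of_pos (norm_pos_iff.mpr hz)

theorem setLIntegral_compl_unitBall_norm_rpow_lt_top {a : ℝ} (ha : a < -(finrank ℝ F : ℝ)) :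
    ∫⁻ z in (ball 0 1)ᶜ, ENNReal.ofReal ‖z‖ ^ a ∂μ < ∞ := by
  have hle : ∀ z ∈ (ball (0 : F) 1)ᶜ, ENNReal.ofReal ‖z‖ ^ a ≤
      ENNReal.ofReal 2⁻¹ ^ a * ENNReal.ofReal ((1 + ‖z‖) ^ a) := by
    intro z hz
    have hz1 : 1 ≤ ‖z‖ := by simpa using hz
    rw [← ENNReal.ofReal_rpow_of_pos (by positivity), ← ENNReal.ofReal_mul_rpow (by norm_num)]
    exact ENNReal.rpow_le_rpow_of_nonpos_s13 (ENNReal.ofReal_le_ofReal (by linarith))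
      (ha.le.trans (by simp))
  calc ∫⁻ z in (ball 0 1)ᶜ, ENNReal.ofReal ‖z‖ ^ a ∂μ
      ≤ ∫⁻ z, ENNReal.ofReal 2⁻¹ ^ a * ENNReal.ofReal ((1 + ‖z‖) ^ a) ∂μ :=
        (setLIntegral_mono (by fun_prop) hle).trans (setLIntegral_le_lintegral _ _)
    _ < ∞ := by
        rw [lintegral_const_mul' _ _ (ENNReal.ofReal_rpow_ne_top (by norm_num) _)]
        exact ENNReal.mul_lt_top (ENNReal.ofReal_rpow_ne_top (by norm_num) _).lt_top
          (by simpa using finite_integral_one_add_norm (μ := μ) (r := -a) (by linarith))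

end Scaling

section Regions

variable {E F : Type*} [NormedAddCommGroup E] [NormedSpace ℝ E] [NormedAddCommGroup F]
  [NormedSpace ℝ F] [FiniteDimensional ℝ F] [Nontrivial F] [MeasurableSpace F] [BorelSpace F]
  (μ : Measure F) [μ.IsAddHaarMeasure] (ι : F →ₗᵢ[ℝ] E)

theorem exists_setLIntegral_inner_ball_le {k : ℝ} (hk : 0 ≤ k) (hkd : k < finrank ℝ F) :
    ∃ c : ℝ≥0∞, c ≠ ∞ ∧ ∀ x : E,
      ∫⁻ y in ball 0 (2⁻¹ * (1 + ‖x‖) - 1),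
          ENNReal.ofReal ‖x - ι y‖ ^ (1 - (finrank ℝ F : ℝ)) * ENNReal.ofReal (1 + ‖y‖) ^ (-k) ∂μ
        ≤ c * ENNReal.ofReal (1 + ‖x‖) ^ (1 - k) := by
  refine ⟨ENNReal.ofReal 2⁻¹ ^ (1 - k) * ∫⁻ z in ball 0 1, ENNReal.ofReal ‖z‖ ^ (-k) ∂μ,
    ENNReal.mul_ne_top (ENNReal.ofReal_rpow_ne_top (by norm_num) _)
      (setLIntegral_unitBall_norm_rpow_lt_top μ (by linarith)).ne, fun x => ?_⟩
  set R := 1 + ‖x‖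
  have hR : 0 < 2⁻¹ * R := by positivity
  have hd := one_sub_finrank_nonpos F
  have hpt : ∀ y ∈ ball (0 : F) (2⁻¹ * R - 1),
      ENNReal.ofReal ‖x - ι y‖ ^ (1 - (finrank ℝ F : ℝ)) * ENNReal.ofReal (1 + ‖y‖) ^ (-k) ≤
        ENNReal.ofReal (2⁻¹ * R) ^ (1 - (finrank ℝ F : ℝ)) * ENNReal.ofReal ‖y‖ ^ (-k) := by
    intro y hy
    rw [mem_ball_zero_iff] at hy
    have hxy : 2⁻¹ * R ≤ ‖x - ι y‖ := by
      have := norm_sub_norm_le x (ι y)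
      rw [ι.norm_map] at this
      linarith
    exact mul_le_mul' (ENNReal.rpow_le_rpow_of_nonpos_s13 (ENNReal.ofReal_le_ofReal hxy) hd)
      (ENNReal.rpow_le_rpow_of_nonpos_s13 (ENNReal.ofReal_le_ofReal (by linarith)) (by linarith))
  calc _ ≤ ∫⁻ y in ball 0 (2⁻¹ * R),
          ENNReal.ofReal (2⁻¹ * R) ^ (1 - (finrank ℝ F : ℝ)) * ENNReal.ofReal ‖y‖ ^ (-k) ∂μ :=
        (setLIntegral_mono (by fun_prop) hpt).trans
          (lintegral_mono_set (ball_subset_ball (by linarith)))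
    _ = ENNReal.ofReal (2⁻¹ * R) ^ (1 - (finrank ℝ F : ℝ)) * (ENNReal.ofReal (2⁻¹ * R) ^
          (finrank ℝ F + -k) * ∫⁻ z in ball 0 1, ENNReal.ofReal ‖z‖ ^ (-k) ∂μ) := by
        rw [lintegral_const_mul' _ _ (ENNReal.ofReal_rpow_ne_top hR _),
          setLIntegral_ball_norm_rpow μ _ hR]
    _ = _ := by
        rw [← mul_assoc,
          ← ENNReal.rpow_add _ _ (ENNReal.ofReal_pos.mpr hR).ne' ENNReal.ofReal_ne_top,
          ENNReal.ofReal_mul_rpow (by norm_num)]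
        ring_nf

theorem exists_setLIntegral_compl_ball_le {k : ℝ} (hk : 1 < k) :
    ∃ c : ℝ≥0∞, c ≠ ∞ ∧ ∀ x : E,
      ∫⁻ y in (ball 0 (2 * (1 + ‖x‖)))ᶜ,
          ENNReal.ofReal ‖x - ι y‖ ^ (1 - (finrank ℝ F : ℝ)) * ENNReal.ofReal (1 + ‖y‖) ^ (-k) ∂μ
        ≤ c * ENNReal.ofReal (1 + ‖x‖) ^ (1 - k) := by
  refine ⟨ENNReal.ofReal 2⁻¹ ^ (1 - (finrank ℝ F : ℝ)) * ENNReal.ofReal 2 ^ (1 - k) *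
      ∫⁻ z in (ball 0 1)ᶜ, ENNReal.ofReal ‖z‖ ^ (1 - (finrank ℝ F : ℝ) - k) ∂μ,
    ENNReal.mul_ne_top (ENNReal.mul_ne_top (ENNReal.ofReal_rpow_ne_top (by norm_num) _)
      (ENNReal.ofReal_rpow_ne_top (by norm_num) _))
      (setLIntegral_compl_unitBall_norm_rpow_lt_top μ (by linarith)).ne, fun x => ?_⟩
  set R := 1 + ‖x‖
  have hR : 0 < 2 * R := by positivity
  have hd := one_sub_finrank_nonpos F
  have hpt : ∀ y ∈ (ball (0 : F) (2 * R))ᶜ,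
      ENNReal.ofReal ‖x - ι y‖ ^ (1 - (finrank ℝ F : ℝ)) * ENNReal.ofReal (1 + ‖y‖) ^ (-k) ≤
        ENNReal.ofReal 2⁻¹ ^ (1 - (finrank ℝ F : ℝ)) *
          ENNReal.ofReal ‖y‖ ^ (1 - (finrank ℝ F : ℝ) - k) := by
    intro y hy
    have hy : 2 * R ≤ ‖y‖ := by simpa using hy
    have hxy : 2⁻¹ * ‖y‖ ≤ ‖x - ι y‖ := by
      have := norm_sub_norm_le (ι y) x
      rw [ι.norm_map, norm_sub_rev] at this
      linarith
    calc _ ≤ ENNReal.ofReal (2⁻¹ * ‖y‖) ^ (1 - (finrank ℝ F : ℝ)) * ENNReal.ofReal ‖y‖ ^ (-k) :=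
          mul_le_mul' (ENNReal.rpow_le_rpow_of_nonpos_s13 (ENNReal.ofReal_le_ofReal hxy) hd)
            (ENNReal.rpow_le_rpow_of_nonpos_s13 (ENNReal.ofReal_le_ofReal (by linarith)) (by linarith))
      _ = _ := by
          rw [ENNReal.ofReal_mul_rpow (by norm_num), mul_assoc, sub_eq_add_neg _ k,
            ENNReal.rpow_add _ _ (ENNReal.ofReal_pos.mpr (by linarith)).ne' ENNReal.ofReal_ne_top]
  calc _ ≤ ∫⁻ y in (ball 0 (2 * R))ᶜ, ENNReal.ofReal 2⁻¹ ^ (1 - (finrank ℝ F : ℝ)) *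
          ENNReal.ofReal ‖y‖ ^ (1 - (finrank ℝ F : ℝ) - k) ∂μ :=
        setLIntegral_mono (by fun_prop) hpt
    _ = ENNReal.ofReal 2⁻¹ ^ (1 - (finrank ℝ F : ℝ)) * (ENNReal.ofReal (2 * R) ^
          (finrank ℝ F + (1 - finrank ℝ F - k)) *
            ∫⁻ z in (ball 0 1)ᶜ, ENNReal.ofReal ‖z‖ ^ (1 - (finrank ℝ F : ℝ) - k) ∂μ) := by
        rw [lintegral_const_mul' _ _ (ENNReal.ofReal_rpow_ne_top (by norm_num) _),
          setLIntegral_compl_ball_norm_rpow μ _ hR]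
    _ = _ := by
        rw [ENNReal.ofReal_mul_rpow (by norm_num)]
        ring_nf

end Regions

section InnerProduct

variable {E F : Type*} [NormedAddCommGroup E] [InnerProductSpace ℝ E] [NormedAddCommGroup F]
  [InnerProductSpace ℝ F] [FiniteDimensional ℝ F]

theorem LinearIsometry.exists_norm_le_and_norm_sub_le (ι : F →ₗᵢ[ℝ] E) (x : E) :
    ∃ p : F, ‖p‖ ≤ ‖x‖ ∧ ∀ y, ‖p - y‖ ≤ ‖x - ι y‖ := by
  let K := LinearMap.range ι.toLinearMap
  obtain ⟨p, hp⟩ := K.starProjection_apply_mem x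
  replace hp : ι p = K.starProjection x := hp
  refine ⟨p, ?_, fun y => ?_⟩
  · rw [← ι.norm_map, hp]
    exact K.norm_starProjection_apply_le x
  · have hy : K.starProjection (ι y) = ι y := K.starProjection_eq_self_iff.mpr ⟨y, rfl⟩
    calc ‖p - y‖ = ‖K.starProjection (x - ι y)‖ := by rw [← ι.norm_map, map_sub, map_sub, hp, hy]
      _ ≤ ‖x - ι y‖ := K.norm_starProjection_apply_le _

variable [MeasurableSpace F] [BorelSpace F] (μ : Measure F) [μ.IsAddHaarMeasure] (ι : F →ₗᵢ[ℝ] E)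

theorem exists_setLIntegral_annulus_le [Nontrivial F] {k : ℝ} (hk : 0 ≤ k) :
    ∃ c : ℝ≥0∞, c ≠ ∞ ∧ ∀ x : E,
      ∫⁻ y in ball 0 (2 * (1 + ‖x‖)) \ ball 0 (2⁻¹ * (1 + ‖x‖) - 1),
          ENNReal.ofReal ‖x - ι y‖ ^ (1 - (finrank ℝ F : ℝ)) * ENNReal.ofReal (1 + ‖y‖) ^ (-k) ∂μ
        ≤ c * ENNReal.ofReal (1 + ‖x‖) ^ (1 - k) := by
  refine ⟨ENNReal.ofReal 2⁻¹ ^ (-k) * ENNReal.ofReal 3 *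
      ∫⁻ z in ball 0 1, ENNReal.ofReal ‖z‖ ^ (1 - (finrank ℝ F : ℝ)) ∂μ,
    ENNReal.mul_ne_top (ENNReal.mul_ne_top (ENNReal.ofReal_rpow_ne_top (by norm_num) _)
      ENNReal.ofReal_ne_top) (setLIntegral_unitBall_norm_rpow_lt_top μ (by linarith)).ne,
    fun x => ?_⟩
  set R := 1 + ‖x‖
  have hR : 0 < R := by positivity
  have hd := one_sub_finrank_nonpos F
  obtain ⟨p, hpx, hp⟩ := ι.exists_norm_le_and_norm_sub_le x
  have hpt : ∀ y ∈ ball (0 : F) (2 * R) \ ball 0 (2⁻¹ * R - 1),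
      ENNReal.ofReal ‖x - ι y‖ ^ (1 - (finrank ℝ F : ℝ)) * ENNReal.ofReal (1 + ‖y‖) ^ (-k) ≤
        ENNReal.ofReal (2⁻¹ * R) ^ (-k) * ENNReal.ofReal ‖y - p‖ ^ (1 - (finrank ℝ F : ℝ)) := by
    rintro y ⟨-, hy⟩
    have hy : 2⁻¹ * R - 1 ≤ ‖y‖ := by simpa using hy
    refine (mul_le_mul' ?_ ?_).trans_eq (mul_comm _ _)
    · rw [norm_sub_rev y p]
      exact ENNReal.rpow_le_rpow_of_nonpos_s13 (ENNReal.ofReal_le_ofReal (hp y)) hd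
    · exact ENNReal.rpow_le_rpow_of_nonpos_s13 (ENNReal.ofReal_le_ofReal (by linarith)) (by linarith)
  have hball : ball (0 : F) (2 * R) ⊆ ball p (3 * R) := by
    intro y hy
    rw [mem_ball_zero_iff] at hy
    rw [mem_ball, dist_eq_norm]
    linarith [norm_sub_le y p]
  calc _ ≤ ∫⁻ y in ball p (3 * R),
          ENNReal.ofReal (2⁻¹ * R) ^ (-k) * ENNReal.ofReal ‖y - p‖ ^ (1 - (finrank ℝ F : ℝ)) ∂μ :=
        (setLIntegral_mono (by fun_prop) hpt).trans (lintegral_mono_set (sdiff_subset.trans hball))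
    _ = ENNReal.ofReal (2⁻¹ * R) ^ (-k) * (ENNReal.ofReal (3 * R) ^
          ((finrank ℝ F : ℝ) + (1 - finrank ℝ F)) *
            ∫⁻ z in ball 0 1, ENNReal.ofReal ‖z‖ ^ (1 - (finrank ℝ F : ℝ)) ∂μ) := by
        rw [lintegral_const_mul' _ _ (ENNReal.ofReal_rpow_ne_top (by positivity) _),
          setLIntegral_ball_comp_sub μ (fun z => ENNReal.ofReal ‖z‖ ^ (1 - (finrank ℝ F : ℝ))),
          setLIntegral_ball_norm_rpow μ _ (by positivity)]
    _ = _ := by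
        rw [add_sub_cancel, ENNReal.rpow_one, ENNReal.ofReal_mul_rpow (by norm_num),
          ENNReal.ofReal_mul (by norm_num), sub_eq_neg_add 1 k,
          ENNReal.rpow_add _ _ (ENNReal.ofReal_pos.mpr hR).ne' ENNReal.ofReal_ne_top,
          ENNReal.rpow_one]
        ring

theorem exists_lintegral_norm_sub_rpow_mul_one_add_norm_rpow_le {k : ℝ} (hk : 1 < k)
    (hkd : k < finrank ℝ F) :
    ∃ C : ℝ≥0∞, C ≠ ∞ ∧ ∀ x : E,
      ∫⁻ y, ENNReal.ofReal ‖x - ι y‖ ^ (1 - (finrank ℝ F : ℝ)) * ENNReal.ofReal (1 + ‖y‖) ^ (-k) ∂μ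
        ≤ C * ENNReal.ofReal (1 + ‖x‖) ^ (1 - k) := by
  have hd : (0 : ℝ) < finrank ℝ F := by linarith
  have : Nontrivial F := Module.nontrivial_of_finrank_pos (R := ℝ) (by exact_mod_cast hd)
  obtain ⟨c₁, hc₁, h₁⟩ := exists_setLIntegral_inner_ball_le μ ι (by linarith) hkd
  obtain ⟨c₂, hc₂, h₂⟩ := exists_setLIntegral_annulus_le μ ι (by linarith)
  obtain ⟨c₃, hc₃, h₃⟩ := exists_setLIntegral_compl_ball_le μ ι hk
  refine ⟨c₁ + c₂ + c₃, by simp [hc₁, hc₂, hc₃], fun x => ?_⟩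
  set B := ball (0 : F) (2 * (1 + ‖x‖))
  set s := ball (0 : F) (2⁻¹ * (1 + ‖x‖) - 1)
  rw [← lintegral_add_compl _ (measurableSet_ball : MeasurableSet B), add_mul, add_mul]
  gcongr ?_ + ?_
  · calc _ ≤ _ := lintegral_mono_set (subset_union_right.trans union_sdiff_self.superset)
      _ ≤ _ := lintegral_union_le _ s (B \ s)
      _ ≤ _ := add_le_add (h₁ x) (h₂ x)
  · exact h₃ x

end InnerProduct

def upLinearIsometry (n : ℕ) : EuclideanSpace ℝ (Fin n) →ₗᵢ[ℝ] EuclideanSpace ℝ (Fin (n + 1)) where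
  toFun y := up (n + 1) y 0
  map_add' y z := by
    ext i
    simp only [up, WithLp.equiv_symm_apply, PiLp.toLp_apply, PiLp.add_apply]
    split_ifs <;> simp
  map_smul' c y := by
    ext i
    simp only [up, WithLp.equiv_symm_apply, PiLp.toLp_apply, PiLp.smul_apply, RingHom.id_apply]
    split_ifs <;> simp
  norm_map' y := by
    simp [EuclideanSpace.norm_eq, Fin.sum_univ_castSucc, up]

theorem integral_estimate_two_general
    (N : ℕ) (k : ℝ) (hk1 : 1 < k) (hkN : k < (N : ℝ) - 1) :
    ∃ C > 0, ∀ x : EuclideanSpace ℝ (Fin N),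
      (∫⁻ y', ENNReal.ofReal ‖x - up N y' 0‖ ^ ((2 : ℝ) - N) *
          ENNReal.ofReal (1 + ‖y'‖) ^ (-k)) ≤
        ENNReal.ofReal (C * (1 + ‖x‖) ^ (1 - k)) := by
  obtain ⟨n, rfl⟩ : ∃ n, N = n + 1 :=
    Nat.exists_eq_add_one.mpr (by exact_mod_cast (by linarith : (0 : ℝ) < N))
  have hkn : k < finrank ℝ (EuclideanSpace ℝ (Fin n)) := by
    rw [finrank_euclideanSpace_fin]; push_cast at hkN; linarith
  obtain ⟨C, hC, hle⟩ := exists_lintegral_norm_sub_rpow_mul_one_add_norm_rpow_le volume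
    (upLinearIsometry n) hk1 hkn
  refine ⟨C.toReal + 1, by positivity, fun x => ?_⟩
  have hexp : (2 : ℝ) - ((n + 1 : ℕ) : ℝ) = 1 - finrank ℝ (EuclideanSpace ℝ (Fin n)) := by
    rw [finrank_euclideanSpace_fin]; push_cast; ring
  calc _ ≤ C * ENNReal.ofReal (1 + ‖x‖) ^ (1 - k) := hexp ▸ hle x
    _ = ENNReal.ofReal (C.toReal * (1 + ‖x‖) ^ (1 - k)) := by
        rw [ENNReal.ofReal_mul ENNReal.toReal_nonneg, ENNReal.ofReal_toReal hC,
          ENNReal.ofReal_rpow_of_pos (by positivity)]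
    _ ≤ _ := ENNReal.ofReal_le_ofReal (by gcongr; linarith)

/-- Lemma 2.6: if `1 < k < N-1` then there is `C₂ = C₂(N,k) > 0` with
`∫_{ℝ^{N-1}} |x-(y',0)|^{-(N-2)} (1+|y'|)^{-k} dy' ≤ C₂ (1+|x|)^{1-k}` for all `x ∈ ℝ^N`. -/
theorem integral_estimate_two
    (N : ℕ) (hN : 3 ≤ N) (k : ℝ) (hk1 : 1 < k) (hkN : k < (N : ℝ) - 1) :
    ∃ C > 0, ∀ x : EuclideanSpace ℝ (Fin N),
      (∫⁻ y', ENNReal.ofReal ‖x - up N y' 0‖ ^ ((2 : ℝ) - N) *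
          ENNReal.ofReal (1 + ‖y'‖) ^ (-k)) ≤
        ENNReal.ofReal (C * (1 + ‖x‖) ^ (1 - k)) :=
  integral_estimate_two_general N k hk1 hkN
end
end
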